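/- Let (X_1,…,X_n) be an H-frame on an open set V ⊆ ℝⁿ and a ∈ V. For i = 1,2 let φ_i = ψ̂_i ∘ T_i, where T_i is an affine bijection of ℝⁿ with T_i(a) = 0 and ψ̂_i is a polynomial map with components (ψ̂_i)_k(x) = x_k + Σ_{α : ⟨α⟩ < w_k, |α| ≥ 2} a^{(i)}_{kα} x^α (a^{(i)}_{kα} ∈ ℝ). If both φ_1 and φ_2 produce privileged coordinates at a adapted to (X_1,…,X_n), then φ_1 = φ_2. -/

import Mathlib

open scoped BigOperators
open Filter Topology

namespace Carnot

/-- Anisotropic dilation `t · x = (t^{w_1} x_1, …, t^{w_n} x_n)`. -/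
def dil {n : ℕ} (w : Fin n → ℕ) (t : ℝ) (x : Fin n → ℝ) : Fin n → ℝ :=
  fun i => t ^ (w i) * x i

/-- Weighted length `⟨α⟩` of a multi-index. -/
def wlen {n : ℕ} (w : Fin n → ℕ) (α : Fin n → ℕ) : ℕ := ∑ i, w i * α i

/-- Length `|α|` of a multi-index. -/
def mlen {n : ℕ} (α : Fin n → ℕ) : ℕ := ∑ i, α i

/-- A vector field acting on a function: `(Xf)(x) = Df(x)[X(x)]`. -/
noncomputable def vf {n : ℕ} (X : (Fin n → ℝ) → (Fin n → ℝ)) (f : (Fin n → ℝ) → ℝ) :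
    (Fin n → ℝ) → ℝ :=
  fun x => fderiv ℝ f x (X x)

/-- Iterated action `X_I f = X_{i_1}(X_{i_2}(⋯(X_{i_k} f)))`. -/
noncomputable def vfSeq {n : ℕ} (X : Fin n → (Fin n → ℝ) → (Fin n → ℝ)) :
    List (Fin n) → ((Fin n → ℝ) → ℝ) → ((Fin n → ℝ) → ℝ)
  | [], f => f
  | i :: I, f => vf (X i) (vfSeq X I f)

/-- Weight `⟨I⟩` of a finite sequence of indices. -/
def seqW {n : ℕ} (w : Fin n → ℕ) (I : List (Fin n)) : ℕ := (I.map w).sum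

/-- The list `(1,…,1,2,…,2,…,n,…,n)` with `i` repeated `α i` times. -/
def multiList {n : ℕ} (α : Fin n → ℕ) : List (Fin n) :=
  (List.finRange n).flatMap fun i => List.replicate (α i) i

/-- `X^α f = X_1^{α_1} ⋯ X_n^{α_n} f`. -/
noncomputable def vfPow {n : ℕ} (X : Fin n → (Fin n → ℝ) → (Fin n → ℝ)) (α : Fin n → ℕ)
    (f : (Fin n → ℝ) → ℝ) : (Fin n → ℝ) → ℝ :=
  vfSeq X (multiList α) f

/-- Partial derivative `∂^α f`. -/
noncomputable def pdPow {n : ℕ} (α : Fin n → ℕ) (f : (Fin n → ℝ) → ℝ) : (Fin n → ℝ) → ℝ :=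
  vfPow (fun i => fun _ => Pi.single i (1 : ℝ)) α f

/-- Lie bracket of two vector fields. -/
noncomputable def lieBk {n : ℕ} (X Y : (Fin n → ℝ) → (Fin n → ℝ)) : (Fin n → ℝ) → (Fin n → ℝ) :=
  fun x => fderiv ℝ Y x (X x) - fderiv ℝ X x (Y x)

/-- A weight sequence: non-decreasing, positive, starting at `1`. -/
structure IsWeight {n : ℕ} (w : Fin n → ℕ) : Prop where
  mono : Monotone w
  pos : ∀ i, 0 < w i
  first : ∀ h : 0 < n, w ⟨0, h⟩ = 1

/-- An `H`-frame on `V`. -/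
structure IsHFrame {n : ℕ} (w : Fin n → ℕ) (X : Fin n → (Fin n → ℝ) → (Fin n → ℝ))
    (V : Set (Fin n → ℝ)) : Prop where
  smooth : ∀ j, ContDiffOn ℝ (⊤ : ℕ∞) (X j) V
  basis : ∀ x ∈ V, LinearIndependent ℝ fun j => X j x
  bracket : ∃ L : Fin n → Fin n → Fin n → (Fin n → ℝ) → ℝ,
    (∀ i j k, ContDiffOn ℝ (⊤ : ℕ∞) (L i j k) V) ∧
    (∀ i j k, ¬ w k ≤ w i + w j → ∀ x ∈ V, L i j k x = 0) ∧
    ∀ i j, ∀ x ∈ V, lieBk (X i) (X j) x = ∑ k, L i j k x • X k x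

/-- `f` has order `≥ N` at `a` with respect to the frame `X`. -/
def OrderGe {n : ℕ} (w : Fin n → ℕ) (X : Fin n → (Fin n → ℝ) → (Fin n → ℝ))
    (f : (Fin n → ℝ) → ℝ) (a : Fin n → ℝ) (N : ℕ) : Prop :=
  ∀ I : List (Fin n), seqW w I < N → vfSeq X I f a = 0

/-- `f` has order exactly `N` at `a` with respect to the frame `X`. -/
def OrderEq {n : ℕ} (w : Fin n → ℕ) (X : Fin n → (Fin n → ℝ) → (Fin n → ℝ))
    (f : (Fin n → ℝ) → ℝ) (a : Fin n → ℝ) (N : ℕ) : Prop :=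
  OrderGe w X f a N ∧ ∃ I : List (Fin n), seqW w I = N ∧ vfSeq X I f a ≠ 0

/-- `f` has weight `≥ N`. -/
def WeightGe {n : ℕ} (w : Fin n → ℕ) (f : (Fin n → ℝ) → ℝ) (N : ℤ) : Prop :=
  ∀ α : Fin n → ℕ, (wlen w α : ℤ) < N → pdPow α f 0 = 0

/-- `f` has weight exactly `N`. -/
def WeightEq {n : ℕ} (w : Fin n → ℕ) (f : (Fin n → ℝ) → ℝ) (N : ℤ) : Prop :=
  WeightGe w f N ∧ ∃ α : Fin n → ℕ, (wlen w α : ℤ) = N ∧ pdPow α f 0 ≠ 0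

/-- A pseudo-norm for the anisotropic dilations. -/
structure IsPseudoNorm {n : ℕ} (w : Fin n → ℕ) (ρ : (Fin n → ℝ) → ℝ) : Prop where
  cont : Continuous ρ
  nonneg : ∀ x, 0 ≤ ρ x
  pos : ∀ x, x ≠ 0 → 0 < ρ x
  homog : ∀ t x, ρ (dil w t x) = |t| * ρ x

/-- Multi-indices with all entries `< B`. -/
def mIdx (n B : ℕ) : Finset (Fin n → ℕ) := Fintype.piFinset fun _ => Finset.range B

/-- The monomial `x^α`. -/
def monom {n : ℕ} (α : Fin n → ℕ) (x : Fin n → ℝ) : ℝ := ∏ i, x i ^ α i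

/-- Taylor coefficient `(1/α!) ∂^α f(0)`. -/
noncomputable def taylorCoeff {n : ℕ} (α : Fin n → ℕ) (f : (Fin n → ℝ) → ℝ) : ℝ :=
  ((∏ i, Nat.factorial (α i) : ℕ) : ℝ)⁻¹ * pdPow α f 0

/-- The homogeneous part `f^[ℓ]` of degree `ℓ` of the Taylor series of `f` at `0`. -/
noncomputable def homPart {n : ℕ} (w : Fin n → ℕ) (f : (Fin n → ℝ) → ℝ) (ℓ : ℕ) :
    (Fin n → ℝ) → ℝ :=
  fun x => ∑ α ∈ (mIdx n (ℓ + 1)).filter (fun α => wlen w α = ℓ),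
    taylorCoeff α f * monom α x

/-- `u_t = O(t^m)` in `C^∞(U)` as `t → 0`. -/
def BigOC {n : ℕ} (U : Set (Fin n → ℝ)) (u : ℝ → (Fin n → ℝ) → ℝ) (m : ℤ) : Prop :=
  ∀ K : Set (Fin n → ℝ), K ⊆ U → IsCompact K → ∀ β : Fin n → ℕ,
    ∃ C : ℝ, ∀ᶠ t in 𝓝[≠] (0 : ℝ), ∀ x ∈ K, |pdPow β (u t) x| ≤ C * |t| ^ m

/-- Componentwise `O(t^m)` in `C^∞(U)` for families of vector fields. -/
def BigOCVF {n : ℕ} (U : Set (Fin n → ℝ)) (u : ℝ → (Fin n → ℝ) → Fin n → ℝ)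
    (m : ℤ) : Prop :=
  ∀ K : Set (Fin n → ℝ), K ⊆ U → IsCompact K → ∀ β : Fin n → ℕ, ∀ k : Fin n,
    ∃ C : ℝ, ∀ᶠ t in 𝓝[≠] (0 : ℝ), ∀ x ∈ K,
      |pdPow β (fun y => u t y k) x| ≤ C * |t| ^ m

/-- `Θ = O_w(‖x‖^{w+m})` near `x = 0`. -/
def IsOw {n : ℕ} (w : Fin n → ℕ) (ρ : (Fin n → ℝ) → ℝ)
    (Θ : (Fin n → ℝ) → (Fin n → ℝ)) (m : ℤ) : Prop :=
  ∀ k, ∃ C : ℝ, ∀ᶠ x in 𝓝 (0 : Fin n → ℝ), |Θ x k| ≤ C * ρ x ^ ((w k : ℤ) + m)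

/-- A `w`-homogeneous map. -/
def WHomog {n : ℕ} (w : Fin n → ℕ) (φ : (Fin n → ℝ) → (Fin n → ℝ)) : Prop :=
  ∀ t x, φ (dil w t x) = dil w t (φ x)

/-- A map whose components are polynomial functions. -/
def IsPolyMap {n : ℕ} (φ : (Fin n → ℝ) → (Fin n → ℝ)) : Prop :=
  ∀ k, ∃ p : MvPolynomial (Fin n) ℝ, ∀ x, φ x k = MvPolynomial.eval x p

/-- A vector field homogeneous of degree `m`: `δ_t^* Y = t^m Y` for `t ≠ 0`. -/
def VFHomog {n : ℕ} (w : Fin n → ℕ) (Y : (Fin n → ℝ) → (Fin n → ℝ)) (m : ℤ) : Prop :=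
  ∀ t : ℝ, t ≠ 0 → ∀ x k, (t : ℝ) ^ (-(w k : ℤ)) * Y (dil w t x) k = t ^ m * Y x k

/-- A vector field has weight `W`: each component `X_k` has weight `≥ W + w_k`,
with equality for some `k`. -/
def VFWeightEq {n : ℕ} (w : Fin n → ℕ) (X : (Fin n → ℝ) → (Fin n → ℝ)) (W : ℤ) :
    Prop :=
  (∀ k, ∀ α : Fin n → ℕ, (wlen w α : ℤ) < W + w k →
    pdPow α (fun y => X y k) 0 = 0) ∧
  ∃ k, ∃ α : Fin n → ℕ, (wlen w α : ℤ) = W + w k ∧ pdPow α (fun y => X y k) 0 ≠ 0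

/-- The homogeneous part `X^[ℓ]` of degree `ℓ` of a vector field. -/
noncomputable def vfPart {n : ℕ} (w : Fin n → ℕ) (X : (Fin n → ℝ) → (Fin n → ℝ)) (ℓ : ℤ) :
    (Fin n → ℝ) → Fin n → ℝ :=
  fun x k => ∑ α ∈ (mIdx n ((ℓ + w k).toNat + 1)).filter
      (fun α => (wlen w α : ℤ) = ℓ + w k),
    taylorCoeff α (fun y => X y k) * monom α x

/-- `φ` produces privileged coordinates at `a` adapted to the `H`-frame `X`:
it is linearly adapted at `a` and each component has order `w_k` at `a`. -/
def PrivilegedAt {n : ℕ} (w : Fin n → ℕ) (X : Fin n → (Fin n → ℝ) → (Fin n → ℝ))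
    (a : Fin n → ℝ) (φ : (Fin n → ℝ) → (Fin n → ℝ)) : Prop :=
  (∀ j, fderiv ℝ φ a (X j a) = Pi.single j 1) ∧
  ∀ k, OrderEq w X (fun x => φ x k) a (w k)


/-! ### Auxiliary lemmas -/

section Aux

open Finset

variable {n : ℕ}

lemma monom_zero_of_ne {γ : Fin n → ℕ} (h : γ ≠ 0) : monom γ (0 : Fin n → ℝ) = 0 := by
  obtain ⟨j, hj⟩ : ∃ j, γ j ≠ 0 := by
    by_contra hc; push_neg at hc; exact h (funext hc)
  exact Finset.prod_eq_zero (Finset.mem_univ j) (by simp [zero_pow hj])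

lemma contDiff_monom (γ : Fin n → ℕ) : ContDiff ℝ (⊤ : ℕ∞) (monom γ) := by
  have : ContDiff ℝ (⊤ : ℕ∞) (fun x : Fin n → ℝ => ∏ i, x i ^ γ i) :=
    contDiff_prod (fun i _ =>
      ((ContinuousLinearMap.proj i : (Fin n → ℝ) →L[ℝ] ℝ).contDiff).pow (γ i))
  exact this

/-- The derivative of a monomial. -/
noncomputable def monomDeriv (γ : Fin n → ℕ) (x : Fin n → ℝ) : (Fin n → ℝ) →L[ℝ] ℝ :=
  ∑ i, ((γ i : ℝ) * monom (γ - Pi.single i 1) x) • ContinuousLinearMap.proj i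

lemma monomDeriv_apply (γ : Fin n → ℕ) (x u : Fin n → ℝ) :
    monomDeriv γ x u = ∑ i, (γ i : ℝ) * monom (γ - Pi.single i 1) x * u i := by
  simp [monomDeriv, mul_assoc]

lemma monomDeriv_single (γ : Fin n → ℕ) (x : Fin n → ℝ) (l : Fin n) :
    monomDeriv γ x (Pi.single l 1) = (γ l : ℝ) * monom (γ - Pi.single l 1) x := by
  rw [monomDeriv_apply]
  rw [Finset.sum_eq_single l]
  · simp
  · intro j _ hj
    simp [Pi.single_eq_of_ne hj]
  · simp

lemma monom_coeff_aux (γ : Fin n → ℕ) (x : Fin n → ℝ) (i : Fin n) :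
    (∏ j ∈ Finset.univ.erase i, x j ^ γ j) * ((γ i : ℝ) * x i ^ (γ i - 1))
      = (γ i : ℝ) * monom (γ - Pi.single i 1) x := by
  rcases Nat.eq_zero_or_pos (γ i) with h | h
  · simp [h]
  · have hm : monom (γ - Pi.single i 1) x
        = x i ^ (γ i - 1) * ∏ j ∈ Finset.univ.erase i, x j ^ γ j := by
      rw [monom, ← Finset.mul_prod_erase Finset.univ _ (Finset.mem_univ i)]
      congr 1
      · simp
      · exact Finset.prod_congr rfl (fun j hj => by
          have hji : j ≠ i := Finset.ne_of_mem_erase hj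
          simp [Pi.single_eq_of_ne hji])
    rw [hm]; ring

lemma hasFDerivAt_monom (γ : Fin n → ℕ) (x : Fin n → ℝ) :
    HasFDerivAt (monom γ) (monomDeriv γ x) x := by
  set g : Fin n → (Fin n → ℝ) → ℝ := fun i y => y i ^ γ i with hg
  have h : ∀ i ∈ (Finset.univ : Finset (Fin n)),
      HasFDerivAt (g i)
        (((γ i : ℝ) * x i ^ (γ i - 1)) •
          (ContinuousLinearMap.proj i : (Fin n → ℝ) →L[ℝ] ℝ)) x := by
    intro i _
    have hproj : HasFDerivAt (fun y : Fin n → ℝ => y i)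
        (ContinuousLinearMap.proj i : (Fin n → ℝ) →L[ℝ] ℝ) x :=
      (ContinuousLinearMap.proj i :
        (Fin n → ℝ) →L[ℝ] ℝ).hasFDerivAt
    exact (hasDerivAt_pow (γ i) (x i)).comp_hasFDerivAt x hproj
  have H := HasFDerivAt.finset_prod h
  have hfun : (∏ i ∈ (Finset.univ : Finset (Fin n)), g i ·) = monom γ := by
    funext y; simp [hg, monom]
  have hder : (∑ i ∈ (Finset.univ : Finset (Fin n)),
        (∏ j ∈ Finset.univ.erase i, g j x) •
          (((γ i : ℝ) * x i ^ (γ i - 1)) •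
            (ContinuousLinearMap.proj i : (Fin n → ℝ) →L[ℝ] ℝ)))
      = monomDeriv γ x := by
    rw [monomDeriv]
    refine Finset.sum_congr rfl (fun i _ => ?_)
    rw [smul_smul, hg]
    rw [monom_coeff_aux]
  rwa [hfun, hder] at H

end Aux
section Aux2

open Finset

variable {n : ℕ}

/-- Sums of monomials with coefficients. -/
noncomputable def psum (s : Finset (Fin n → ℕ)) (F : (Fin n → ℕ) → ℝ) : (Fin n → ℝ) → ℝ :=
  fun x => ∑ α ∈ s, F α * monom α x

lemma contDiff_shiftedSum (s : Finset (Fin n → ℕ)) (F : (Fin n → ℕ) → ℝ)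
    (g : (Fin n → ℕ) → (Fin n → ℕ)) :
    ContDiff ℝ (⊤ : ℕ∞) (fun x : Fin n → ℝ => ∑ α ∈ s, F α * monom (g α) x) :=
  ContDiff.sum (fun α _ => contDiff_const.mul (contDiff_monom (g α)))

lemma hasFDerivAt_shiftedSum (s : Finset (Fin n → ℕ)) (F : (Fin n → ℕ) → ℝ)
    (g : (Fin n → ℕ) → (Fin n → ℕ)) (x : Fin n → ℝ) :
    HasFDerivAt (fun x : Fin n → ℝ => ∑ α ∈ s, F α * monom (g α) x)
      (∑ α ∈ s, F α • monomDeriv (g α) x) x :=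
  HasFDerivAt.fun_sum (fun α _ => (hasFDerivAt_monom (g α) x).const_mul (F α))

/-- Product of descending factorials. -/
def dsc (α β : Fin n → ℕ) : ℕ := ∏ i, (α i).descFactorial (β i)

lemma dsc_zero (α : Fin n → ℕ) : dsc α 0 = 1 := by simp [dsc]

lemma dsc_succ (α β : Fin n → ℕ) (l : Fin n) :
    dsc α (β + Pi.single l 1) = (α l - β l) * dsc α β := by
  rw [dsc, dsc, ← Finset.mul_prod_erase Finset.univ _ (Finset.mem_univ l)]
  conv_rhs => rw [← Finset.mul_prod_erase Finset.univ
    (fun i => (α i).descFactorial (β i)) (Finset.mem_univ l)]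
  have h1 : (β + Pi.single l 1 : Fin n → ℕ) l = β l + 1 := by simp
  have h2 : ∀ j ∈ Finset.univ.erase l, (α j).descFactorial ((β + Pi.single l 1 : Fin n → ℕ) j)
      = (α j).descFactorial (β j) := by
    intro j hj
    have : j ≠ l := Finset.ne_of_mem_erase hj
    simp [Pi.single_eq_of_ne this]
  rw [h1, Finset.prod_congr rfl h2, Nat.descFactorial_succ]
  ring

lemma vf_single_shifted (s : Finset (Fin n → ℕ)) (F : (Fin n → ℕ) → ℝ)
    (g : (Fin n → ℕ) → (Fin n → ℕ)) (l : Fin n) :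
    vf (fun _ => Pi.single l 1) (fun x : Fin n → ℝ => ∑ α ∈ s, F α * monom (g α) x)
      = fun x => ∑ α ∈ s, F α * ((g α) l : ℝ) * monom (g α - Pi.single l 1) x := by
  funext x
  rw [vf, (hasFDerivAt_shiftedSum s F g x).fderiv]
  rw [ContinuousLinearMap.sum_apply]
  refine Finset.sum_congr rfl (fun α _ => ?_)
  rw [ContinuousLinearMap.smul_apply, monomDeriv_single]
  simp [mul_assoc]

lemma vfSeq_const_shift (s : Finset (Fin n → ℕ)) (F : (Fin n → ℕ) → ℝ) (L : List (Fin n)) :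
    vfSeq (fun i => fun _ => Pi.single i (1 : ℝ)) L (psum s F)
      = fun x => ∑ α ∈ s,
          F α * (dsc α (fun j => L.count j) : ℝ) * monom (α - fun j => L.count j) x := by
  induction L with
  | nil =>
      simp only [vfSeq]
      funext x
      simp [psum, show (fun j : Fin n => (0:ℕ)) = 0 from rfl, dsc_zero]
  | cons l L ih =>
      show vf (fun _ => Pi.single l (1:ℝ)) _ = _
      rw [ih]
      have := vf_single_shifted s (fun α => F α * (dsc α (fun j => L.count j) : ℝ))
        (fun α => α - fun j => L.count j) l
      simp only [mul_assoc] at this ⊢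
      rw [this]
      funext x
      refine Finset.sum_congr rfl (fun α _ => ?_)
      have hc : (fun j => (l :: L).count j) = (fun j => L.count j) + Pi.single l 1 := by
        funext j
        by_cases h : j = l
        · subst h; simp [List.count_cons]
        · simp [List.count_cons, h, Pi.single_eq_of_ne h, Ne.symm h]
      rw [hc, dsc_succ]
      have hsub : α - ((fun j => L.count j) + Pi.single l 1)
          = (α - fun j => L.count j) - Pi.single l 1 := by
        rw [tsub_add_eq_tsub_tsub]
      rw [hsub]
      have hl : ((α - fun j => L.count j) l : ℝ) = ((α l - L.count l : ℕ) : ℝ) := by rfl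
      push_cast [hl]
      ring

end Aux2
section Aux3

open Finset

variable {n : ℕ}

lemma count_multiList (β : Fin n → ℕ) (j : Fin n) : (multiList β).count j = β j := by
  rw [multiList]
  rw [List.count_flatMap]
  have h1 : (List.map (List.count j ∘ fun i => List.replicate (β i) i) (List.finRange n))
      = List.map (fun i => if i = j then β i else 0) (List.finRange n) := by
    refine List.map_congr_left (fun i _ => ?_)
    simp [List.count_replicate]
  rw [h1, ← Fin.sum_univ_def]
  simp [Finset.sum_ite_eq]

lemma length_multiList (β : Fin n → ℕ) : (multiList β).length = mlen β := by
  rw [multiList, List.length_flatMap]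
  have h1 : (List.map (List.length ∘ fun i => List.replicate (β i) i) (List.finRange n))
      = List.map β (List.finRange n) := by
    refine List.map_congr_left (fun i _ => ?_); simp
  rw [show (List.map (fun a => (List.replicate (β a) a).length) (List.finRange n)) = List.map β (List.finRange n) from h1, ← Fin.sum_univ_def, mlen]

lemma seqW_multiList (w : Fin n → ℕ) (β : Fin n → ℕ) : seqW w (multiList β) = wlen w β := by
  rw [seqW, multiList, List.map_flatMap]
  have h1 : (fun i : Fin n => List.map w (List.replicate (β i) i))
      = fun i => List.replicate (β i) (w i) := by
    funext i; simp
  rw [h1]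
  have h2 : ∀ L : List (Fin n),
      (L.flatMap fun i => List.replicate (β i) (w i)).sum
        = (L.map (fun i => β i * w i)).sum := by
    intro L
    induction L with
    | nil => simp
    | cons a L ih => simp [List.flatMap_cons, ih, List.sum_replicate, smul_eq_mul]
  rw [h2, ← Fin.sum_univ_def, wlen]
  exact Finset.sum_congr rfl (fun i _ => mul_comm _ _)

lemma pdPow_psum (s : Finset (Fin n → ℕ)) (F : (Fin n → ℕ) → ℝ) (β : Fin n → ℕ) :
    pdPow β (psum s F)
      = fun x => ∑ α ∈ s, F α * (dsc α β : ℝ) * monom (α - β) x := by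
  have h := vfSeq_const_shift s F (multiList β)
  have hc : (fun j => (multiList β).count j) = β := by
    funext j; exact count_multiList β j
  rw [hc] at h
  exact h

lemma contDiff_pdPow_psum (s : Finset (Fin n → ℕ)) (F : (Fin n → ℕ) → ℝ) (β : Fin n → ℕ) :
    ContDiff ℝ (⊤ : ℕ∞) (pdPow β (psum s F)) := by
  rw [pdPow_psum]
  exact contDiff_shiftedSum s (fun α => F α * (dsc α β : ℝ)) (fun α => α - β)

lemma hasFDerivAt_pdPow_psum (s : Finset (Fin n → ℕ)) (F : (Fin n → ℕ) → ℝ) (β : Fin n → ℕ)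
    (x : Fin n → ℝ) :
    HasFDerivAt (pdPow β (psum s F))
      (∑ α ∈ s, (F α * (dsc α β : ℝ)) • monomDeriv (α - β) x) x := by
  rw [pdPow_psum]
  exact hasFDerivAt_shiftedSum s (fun α => F α * (dsc α β : ℝ)) (fun α => α - β) x

lemma fderiv_pdPow_psum (s : Finset (Fin n → ℕ)) (F : (Fin n → ℕ) → ℝ) (β : Fin n → ℕ)
    (x u : Fin n → ℝ) :
    fderiv ℝ (pdPow β (psum s F)) x u
      = ∑ l, u l * pdPow (β + Pi.single l 1) (psum s F) x := by
  rw [(hasFDerivAt_pdPow_psum s F β x).fderiv]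
  rw [ContinuousLinearMap.sum_apply]
  have hR : ∀ l, pdPow (β + Pi.single l 1) (psum s F) x
      = ∑ α ∈ s, F α * (dsc α (β + Pi.single l 1) : ℝ) * monom (α - (β + Pi.single l 1)) x := by
    intro l; rw [pdPow_psum]
  simp only [hR, Finset.mul_sum]
  rw [Finset.sum_comm]
  refine Finset.sum_congr rfl (fun α _ => ?_)
  rw [ContinuousLinearMap.smul_apply, monomDeriv_apply, smul_eq_mul, Finset.mul_sum]
  refine Finset.sum_congr rfl (fun l _ => ?_)
  have h1 : α - β - Pi.single l 1 = α - (β + Pi.single l 1) := by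
    rw [tsub_add_eq_tsub_tsub]
  have h2 : ((dsc α (β + Pi.single l 1) : ℕ) : ℝ) = ((α l - β l : ℕ) : ℝ) * (dsc α β : ℝ) := by
    rw [dsc_succ]; push_cast; ring
  have h3 : (((α - β) l : ℕ) : ℝ) = ((α l - β l : ℕ) : ℝ) := rfl
  rw [← h1, h2, h3]
  ring

lemma pdPow_psum_zero (s : Finset (Fin n → ℕ)) (F : (Fin n → ℕ) → ℝ) (β : Fin n → ℕ) :
    pdPow β (psum s F) 0
      = ((∏ i, (β i).factorial : ℕ) : ℝ) * (if β ∈ s then F β else 0) := by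
  rw [pdPow_psum]
  show ∑ α ∈ s, F α * (dsc α β : ℝ) * monom (α - β) 0
      = ((∏ i, (β i).factorial : ℕ) : ℝ) * (if β ∈ s then F β else 0)
  have hterm : ∀ α ∈ s, α ≠ β → F α * (dsc α β : ℝ) * monom (α - β) (0 : Fin n → ℝ) = 0 := by
    intro α _ hαβ
    by_cases hlt : ∃ i, α i < β i
    · obtain ⟨i, hi⟩ := hlt
      have : dsc α β = 0 :=
        Finset.prod_eq_zero (Finset.mem_univ i) (Nat.descFactorial_eq_zero_iff_lt.mpr hi)
      simp [this]
    · push_neg at hlt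
      have hne : α - β ≠ 0 := by
        intro h0
        apply hαβ
        funext i
        have h1 : α i - β i = 0 := congrFun h0 i
        have := hlt i
        omega
      simp [monom_zero_of_ne hne]
  by_cases hβ : β ∈ s
  · rw [Finset.sum_eq_single_of_mem β hβ (fun α hα hne => hterm α hα hne)]
    have h0 : β - β = 0 := by simp
    have h1 : monom (0 : Fin n → ℕ) (0 : Fin n → ℝ) = 1 := by simp [monom]
    have h2 : dsc β β = ∏ i, (β i).factorial := by
      refine Finset.prod_congr rfl (fun i _ => Nat.descFactorial_self _)
    rw [h0, h1, h2, if_pos hβ]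
    ring
  · rw [Finset.sum_eq_zero (fun α hα => hterm α hα (fun h => hβ (h ▸ hα))), if_neg hβ]
    ring

end Aux3
section Aux4

variable {n : ℕ} {V : Set (Fin n → ℝ)} {X : Fin n → (Fin n → ℝ) → (Fin n → ℝ)}

lemma vf_contDiffOn (hV : IsOpen V) (hX : ∀ j, ContDiffOn ℝ (⊤ : ℕ∞) (X j) V)
    {f : (Fin n → ℝ) → ℝ} (hf : ContDiffOn ℝ (⊤ : ℕ∞) f V) (i : Fin n) :
    ContDiffOn ℝ (⊤ : ℕ∞) (vf (X i) f) V := by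
  have h1 : ContDiffOn ℝ (⊤ : ℕ∞) (fderiv ℝ f) V := hf.fderiv_of_isOpen hV (by simp)
  exact h1.clm_apply (hX i)

lemma vfSeq_contDiffOn (hV : IsOpen V) (hX : ∀ j, ContDiffOn ℝ (⊤ : ℕ∞) (X j) V)
    {f : (Fin n → ℝ) → ℝ} (hf : ContDiffOn ℝ (⊤ : ℕ∞) f V) :
    ∀ I : List (Fin n), ContDiffOn ℝ (⊤ : ℕ∞) (vfSeq X I f) V := by
  intro I
  induction I with
  | nil => exact hf
  | cons i I ih => exact vf_contDiffOn hV hX ih i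

lemma vfSeq_differentiableAt (hV : IsOpen V) (hX : ∀ j, ContDiffOn ℝ (⊤ : ℕ∞) (X j) V)
    {f : (Fin n → ℝ) → ℝ} (hf : ContDiffOn ℝ (⊤ : ℕ∞) f V) (I : List (Fin n))
    {x : Fin n → ℝ} (hx : x ∈ V) : DifferentiableAt ℝ (vfSeq X I f) x := by
  have := (vfSeq_contDiffOn hV hX hf I).contDiffAt (hV.mem_nhds hx)
  exact this.differentiableAt (by simp)

lemma vfSeq_sub (hV : IsOpen V) (hX : ∀ j, ContDiffOn ℝ (⊤ : ℕ∞) (X j) V)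
    {f g : (Fin n → ℝ) → ℝ} (hf : ContDiffOn ℝ (⊤ : ℕ∞) f V) (hg : ContDiffOn ℝ (⊤ : ℕ∞) g V) :
    ∀ I : List (Fin n), ∀ x ∈ V,
      vfSeq X I (fun y => f y - g y) x = vfSeq X I f x - vfSeq X I g x := by
  intro I
  induction I with
  | nil => intro x _; rfl
  | cons i I ih =>
      intro x hx
      show vf (X i) _ x = vf (X i) _ x - vf (X i) _ x
      rw [vf, vf, vf]
      have hev : vfSeq X I (fun y => f y - g y)
          =ᶠ[nhds x] fun y => vfSeq X I f y - vfSeq X I g y :=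
        Filter.eventuallyEq_of_mem (hV.mem_nhds hx) (fun y hy => ih y hy)
      rw [hev.fderiv_eq]
      rw [fderiv_fun_sub (vfSeq_differentiableAt hV hX hf I hx)
        (vfSeq_differentiableAt hV hX hg I hx)]
      rfl

lemma vfSeq_chain {U : Set (Fin n → ℝ)} (hV : IsOpen V)
    {Y : Fin n → (Fin n → ℝ) → (Fin n → ℝ)} (hU : IsOpen U)
    (hY : ∀ j, ContDiffOn ℝ (⊤ : ℕ∞) (Y j) U)
    {T : (Fin n → ℝ) → (Fin n → ℝ)} {Acl : (Fin n → ℝ) →L[ℝ] (Fin n → ℝ)}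
    (hT : ∀ x, HasFDerivAt T Acl x)
    (hTV : ∀ x ∈ V, T x ∈ U)
    (hXY : ∀ j, ∀ x ∈ V, Y j (T x) = Acl (X j x))
    {g : (Fin n → ℝ) → ℝ} (hg : ContDiffOn ℝ (⊤ : ℕ∞) g U) :
    ∀ I : List (Fin n), ∀ x ∈ V, vfSeq X I (fun y => g (T y)) x = vfSeq Y I g (T x) := by
  intro I
  induction I with
  | nil => intro x _; rfl
  | cons i I ih =>
      intro x hx
      show vf (X i) _ x = vf (Y i) _ (T x)
      rw [vf, vf]
      have hev : vfSeq X I (fun y => g (T y))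
          =ᶠ[nhds x] fun y => vfSeq Y I g (T y) :=
        Filter.eventuallyEq_of_mem (hV.mem_nhds hx) (fun y hy => ih y hy)
      rw [hev.fderiv_eq]
      have hdiff : DifferentiableAt ℝ (vfSeq Y I g) (T x) :=
        vfSeq_differentiableAt hU hY hg I (hTV x hx)
      have hcomp : HasFDerivAt (fun y => vfSeq Y I g (T y))
          ((fderiv ℝ (vfSeq Y I g) (T x)).comp Acl) x :=
        (hdiff.hasFDerivAt).comp x (hT x)
      rw [hcomp.fderiv]
      rw [ContinuousLinearMap.comp_apply]
      rw [← hXY i x hx]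

end Aux4
section Aux5

open Finset

variable {n : ℕ}

lemma mem_mIdx {B : ℕ} {β : Fin n → ℕ} : β ∈ mIdx n B ↔ ∀ j, β j < B := by
  simp [mIdx, Fintype.mem_piFinset]

lemma single_le_mlen (β : Fin n → ℕ) (j : Fin n) : β j ≤ mlen β :=
  Finset.single_le_sum (fun i _ => Nat.zero_le _) (Finset.mem_univ j)

lemma eq_zero_of_mlen_eq_zero {β : Fin n → ℕ} (h : mlen β = 0) : β = 0 := by
  funext j
  have := single_le_mlen β j
  simp only [Pi.zero_apply]
  omega

lemma mlen_add (a b : Fin n → ℕ) : mlen (a + b) = mlen a + mlen b := by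
  simp [mlen, Finset.sum_add_distrib]

lemma mlen_single (l : Fin n) : mlen (Pi.single l 1 : Fin n → ℕ) = 1 := by
  simp [mlen, Pi.single_apply]

lemma sub_single_add {γ : Fin n → ℕ} {l : Fin n} (h : γ l ≠ 0) :
    γ - Pi.single l 1 + Pi.single l 1 = γ := by
  funext j
  by_cases hj : j = l
  · subst hj
    simp only [Pi.add_apply, Pi.sub_apply, Pi.single_eq_same]
    omega
  · simp [Pi.single_eq_of_ne hj]

lemma mlen_sub_single {γ : Fin n → ℕ} {l : Fin n} (h : γ l ≠ 0) :
    mlen (γ - Pi.single l 1) + 1 = mlen γ := by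
  conv_rhs => rw [← sub_single_add h]
  rw [mlen_add, mlen_single]

lemma countI_cons (i : Fin n) (I : List (Fin n)) :
    (fun j => (i :: I).count j) = (fun j => I.count j) + Pi.single i 1 := by
  funext j
  by_cases h : j = i
  · subst h; simp [List.count_cons]
  · simp [List.count_cons, h, Pi.single_eq_of_ne h, Ne.symm h]

lemma sum_shift (B : ℕ) (l : Fin n) (G : (Fin n → ℕ) → ℝ)
    (hG : ∀ β : Fin n → ℕ, ¬ (∀ j, β j < B) → G β = 0) :
    ∑ γ ∈ mIdx n (B + 1), (if γ l = 0 then 0 else G (γ - Pi.single l 1))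
      = ∑ β ∈ mIdx n B, G β := by
  have hL : ∑ γ ∈ mIdx n (B + 1), (if γ l = 0 then 0 else G (γ - Pi.single l 1))
      = ∑ γ ∈ (mIdx n (B + 1)).filter (fun γ => γ l ≠ 0), G (γ - Pi.single l 1) := by
    rw [Finset.sum_filter]
    refine Finset.sum_congr rfl (fun γ _ => ?_)
    by_cases h : γ l = 0 <;> simp [h]
  have hR : ∑ β ∈ mIdx n B, G β
      = ∑ β ∈ (mIdx n (B + 1)).filter (fun β => β l < B), G β := by
    refine Finset.sum_subset ?_ ?_
    · intro β hβ
      rw [mem_mIdx] at hβ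
      rw [Finset.mem_filter, mem_mIdx]
      exact ⟨fun j => lt_trans (hβ j) (Nat.lt_succ_self B), hβ l⟩
    · intro β hβ hnβ
      apply hG
      intro hall
      apply hnβ
      rw [mem_mIdx]
      exact hall
  rw [hL, hR]
  refine Finset.sum_bij' (fun γ _ => γ - Pi.single l 1) (fun β _ => β + Pi.single l 1)
    ?_ ?_ ?_ ?_ ?_
  · intro γ hγ
    rw [Finset.mem_filter, mem_mIdx] at hγ
    rw [Finset.mem_filter, mem_mIdx]
    constructor
    · intro j
      have := hγ.1 j
      simp only [Pi.sub_apply]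
      omega
    · have := hγ.1 l
      have h2 := hγ.2
      simp only [Pi.sub_apply, Pi.single_eq_same]
      omega
  · intro β hβ
    rw [Finset.mem_filter, mem_mIdx] at hβ
    rw [Finset.mem_filter, mem_mIdx]
    constructor
    · intro j
      by_cases hj : j = l
      · subst hj
        have := hβ.2
        simp only [Pi.add_apply, Pi.single_eq_same]
        omega
      · have := hβ.1 j
        simp [Pi.single_eq_of_ne hj]
        omega
    · simp
  · intro γ hγ
    rw [Finset.mem_filter] at hγ
    exact sub_single_add hγ.2
  · intro β _
    funext j
    by_cases hj : j = l
    · subst hj; simp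
    · simp [Pi.single_eq_of_ne hj]
  · intro γ _
    rfl

end Aux5
section Aux6

open Finset

variable {n : ℕ}

lemma pdPow_zero_idx (f : (Fin n → ℝ) → ℝ) : pdPow (0 : Fin n → ℕ) f = f := by
  have : multiList (0 : Fin n → ℕ) = [] := by
    simp [multiList]
  rw [pdPow, vfPow, this]
  rfl

lemma fderiv_zero_fun (x : Fin n → ℝ) :
    (fderiv ℝ (fun _ : Fin n → ℝ => (0:ℝ)) x) = 0 := fderiv_const_apply 0

lemma lemmaB {U : Set (Fin n → ℝ)} (hU : IsOpen U) (h0 : (0 : Fin n → ℝ) ∈ U)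
    {Y : Fin n → (Fin n → ℝ) → (Fin n → ℝ)} (hY : ∀ j, ContDiffOn ℝ (⊤ : ℕ∞) (Y j) U)
    (hY0 : ∀ j, Y j 0 = Pi.single j 1)
    (s : Finset (Fin n → ℕ)) (F : (Fin n → ℕ) → ℝ) :
    ∀ I : List (Fin n), ∃ c : (Fin n → ℕ) → (Fin n → ℝ) → ℝ,
      (∀ β, ContDiffOn ℝ (⊤ : ℕ∞) (c β) U) ∧
      (∀ β, I.length < mlen β → c β = fun _ => 0) ∧
      (∀ x ∈ U, vfSeq Y I (psum s F) x
        = ∑ β ∈ mIdx n (I.length + 1), c β x * pdPow β (psum s F) x) ∧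
      (∀ β, mlen β = I.length → c β 0 = if β = fun j => I.count j then 1 else 0) := by
  classical
  intro I
  induction I with
  | nil =>
      refine ⟨fun β => if β = 0 then (fun _ => 1) else (fun _ => 0), ?_, ?_, ?_, ?_⟩
      · intro β
        by_cases h : β = 0 <;> simp [h, contDiffOn_const]
      · intro β hβ
        have : β ≠ 0 := by
          intro h; rw [h] at hβ; simp [mlen] at hβ
        simp [this]
      · intro x _
        have hmem : (0 : Fin n → ℕ) ∈ mIdx n (0 + 1) := by
          rw [mem_mIdx]; intro j; simp
        rw [List.length_nil]
        rw [Finset.sum_eq_single_of_mem 0 hmem ?_]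
        · simp [pdPow_zero_idx]
          rfl
        · intro β _ hβ
          simp [hβ]
      · intro β hβ
        have hβ0 : β = 0 := eq_zero_of_mlen_eq_zero (by simpa using hβ)
        have hc : (fun j => ([] : List (Fin n)).count j) = (0 : Fin n → ℕ) := by
          funext j; simp
        rw [hβ0, hc]
        simp
  | cons i I ih =>
      obtain ⟨c, hsm, hsupp, hrep, htop⟩ := ih
      set m := I.length with hm
      set P : (Fin n → ℕ) → (Fin n → ℝ) → ℝ := fun β => pdPow β (psum s F) with hP
      refine ⟨fun γ => fun x => fderiv ℝ (c γ) x (Y i x)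
          + ∑ l, Y i x l * (if γ l = 0 then 0 else c (γ - Pi.single l 1) x), ?_, ?_, ?_, ?_⟩
      · -- smoothness
        intro γ
        refine ContDiffOn.add ?_ ?_
        · exact ((hsm γ).fderiv_of_isOpen hU (by simp)).clm_apply (hY i)
        · refine ContDiffOn.sum (fun l _ => ContDiffOn.mul ?_ ?_)
          · exact (ContinuousLinearMap.proj l :
              (Fin n → ℝ) →L[ℝ] ℝ).contDiff.comp_contDiffOn (hY i)
          · by_cases h : γ l = 0
            · simp [h, contDiffOn_const]
            · simp only [h, if_false]
              exact hsm _
      · -- support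
        intro γ hγ
        have h1 : m < mlen γ := by
          simp only [List.length_cons] at hγ; omega
        funext x
        show fderiv ℝ (c γ) x (Y i x)
            + ∑ l, Y i x l * (if γ l = 0 then 0 else c (γ - Pi.single l 1) x) = 0
        rw [hsupp γ h1]
        rw [fderiv_zero_fun]
        simp only [ContinuousLinearMap.zero_apply, zero_add]
        refine Finset.sum_eq_zero (fun l _ => ?_)
        by_cases h : γ l = 0
        · simp [h]
        · have h2 : m < mlen (γ - Pi.single l 1) := by
            have := mlen_sub_single (γ := γ) (l := l) h
            simp only [List.length_cons] at hγ
            omega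
          rw [hsupp _ h2]
          simp [h]
      · -- representation
        intro x hx
        show fderiv ℝ (vfSeq Y I (psum s F)) x (Y i x) = _
        have hev : vfSeq Y I (psum s F)
            =ᶠ[nhds x] fun y => ∑ β ∈ mIdx n (m + 1), c β y * P β y :=
          Filter.eventuallyEq_of_mem (hU.mem_nhds hx) (fun y hy => hrep y hy)
        rw [hev.fderiv_eq]
        have hdc : ∀ β, DifferentiableAt ℝ (c β) x := fun β =>
          ((hsm β).contDiffAt (hU.mem_nhds hx)).differentiableAt (by simp)
        have hdP : ∀ β, DifferentiableAt ℝ (P β) x := fun β =>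
          (hasFDerivAt_pdPow_psum s F β x).differentiableAt
        rw [fderiv_fun_sum (fun β _ => ((hdc β).fun_mul (hdP β)))]
        rw [ContinuousLinearMap.sum_apply]
        have hterm : ∀ β ∈ mIdx n (m + 1),
            (fderiv ℝ (fun y => c β y * P β y) x) (Y i x)
              = fderiv ℝ (c β) x (Y i x) * P β x
                + c β x * ∑ l, Y i x l * P (β + Pi.single l 1) x := by
          intro β _
          rw [fderiv_fun_mul (hdc β) (hdP β)]
          simp only [ContinuousLinearMap.add_apply, ContinuousLinearMap.smul_apply,
            smul_eq_mul]
          rw [hP]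
          simp only
          rw [fderiv_pdPow_psum]
          ring
        rw [Finset.sum_congr rfl hterm]
        rw [Finset.sum_add_distrib]
        have hA : ∑ β ∈ mIdx n (m + 1), fderiv ℝ (c β) x (Y i x) * P β x
            = ∑ γ ∈ mIdx n (m + 1 + 1), fderiv ℝ (c γ) x (Y i x) * P γ x := by
          refine Finset.sum_subset ?_ ?_
          · intro β hβ
            rw [mem_mIdx] at hβ ⊢
            exact fun j => lt_trans (hβ j) (Nat.lt_succ_self _)
          · intro γ hγ1 hγ2
            have hml : m < mlen γ := by
              rw [mem_mIdx] at hγ1 hγ2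
              push_neg at hγ2
              obtain ⟨j, hj⟩ := hγ2
              have := single_le_mlen γ j
              omega
            rw [hsupp γ hml, fderiv_zero_fun]
            simp
        have hG0 : ∀ l : Fin n, ∀ β : Fin n → ℕ, ¬ (∀ j, β j < m + 1) →
            c β x * P (β + Pi.single l 1) x = 0 := by
          intro l β hβ
          push_neg at hβ
          obtain ⟨j, hj⟩ := hβ
          have hml : m < mlen β := by
            have := single_le_mlen β j
            omega
          rw [hsupp β hml]
          simp
        have hB : ∑ β ∈ mIdx n (m + 1), c β x * ∑ l, Y i x l * P (β + Pi.single l 1) x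
            = ∑ γ ∈ mIdx n (m + 1 + 1),
                (∑ l, Y i x l * (if γ l = 0 then 0 else c (γ - Pi.single l 1) x)) * P γ x := by
          calc ∑ β ∈ mIdx n (m + 1), c β x * ∑ l, Y i x l * P (β + Pi.single l 1) x
              = ∑ β ∈ mIdx n (m + 1), ∑ l, Y i x l * (c β x * P (β + Pi.single l 1) x) := by
                refine Finset.sum_congr rfl (fun β _ => ?_)
                rw [Finset.mul_sum]
                exact Finset.sum_congr rfl (fun l _ => by ring)
            _ = ∑ l, ∑ β ∈ mIdx n (m + 1), Y i x l * (c β x * P (β + Pi.single l 1) x) :=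
                Finset.sum_comm
            _ = ∑ l, Y i x l * ∑ β ∈ mIdx n (m + 1), c β x * P (β + Pi.single l 1) x := by
                refine Finset.sum_congr rfl (fun l _ => ?_)
                rw [Finset.mul_sum]
            _ = ∑ l, Y i x l * ∑ γ ∈ mIdx n (m + 1 + 1),
                  (if γ l = 0 then 0 else c (γ - Pi.single l 1) x * P γ x) := by
                refine Finset.sum_congr rfl (fun l _ => ?_)
                congr 1
                rw [← sum_shift (m + 1) l
                  (fun β => c β x * P (β + Pi.single l 1) x) (hG0 l)]
                refine Finset.sum_congr rfl (fun γ _ => ?_)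
                by_cases h : γ l = 0
                · simp [h]
                · simp only [h, if_false]
                  rw [sub_single_add (γ := γ) (l := l) h]
            _ = ∑ γ ∈ mIdx n (m + 1 + 1), ∑ l, Y i x l *
                  (if γ l = 0 then 0 else c (γ - Pi.single l 1) x * P γ x) := by
                rw [Finset.sum_comm]
                refine Finset.sum_congr rfl (fun l _ => ?_)
                rw [Finset.mul_sum]
            _ = ∑ γ ∈ mIdx n (m + 1 + 1),
                  (∑ l, Y i x l * (if γ l = 0 then 0 else c (γ - Pi.single l 1) x)) * P γ x := by
                refine Finset.sum_congr rfl (fun γ _ => ?_)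
                rw [Finset.sum_mul]
                refine Finset.sum_congr rfl (fun l _ => ?_)
                by_cases h : γ l = 0
                · simp [h]
                · simp only [h, if_false]
                  ring
          -- fix inner congruence for the sum_shift step
        rw [hA, hB, ← Finset.sum_add_distrib]
        refine Finset.sum_congr rfl (fun γ _ => ?_)
        rw [add_mul]
      · -- top value
        intro γ hγ
        show fderiv ℝ (c γ) 0 (Y i 0)
            + ∑ l, Y i 0 l * (if γ l = 0 then 0 else c (γ - Pi.single l 1) 0)
            = if γ = fun j => (i :: I).count j then 1 else 0
        have hmlen : m < mlen γ := by
          simp only [List.length_cons] at hγ; omega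
        rw [hsupp γ hmlen, fderiv_zero_fun]
        simp only [ContinuousLinearMap.zero_apply, zero_add]
        rw [Finset.sum_eq_single i ?_ ?_]
        · rw [hY0 i, Pi.single_eq_same, one_mul]
          rw [countI_cons]
          by_cases h : γ i = 0
          · rw [if_pos h]
            have hne : γ ≠ (fun j => I.count j) + Pi.single i 1 := by
              intro he
              have hval : γ i = ((fun j => I.count j) + Pi.single i 1 : Fin n → ℕ) i := by
                rw [he]
              simp only [Pi.add_apply, Pi.single_eq_same] at hval
              omega
            rw [if_neg hne]
          · rw [if_neg h]
            have h2 : mlen (γ - Pi.single i 1) = m := by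
              have := mlen_sub_single (γ := γ) (l := i) h
              simp only [List.length_cons] at hγ
              omega
            rw [htop _ h2]
            have hiff : (γ - Pi.single i 1 = fun j => I.count j)
                ↔ (γ = (fun j => I.count j) + Pi.single i 1) := by
              constructor
              · intro h3
                conv_lhs => rw [← sub_single_add (γ := γ) (l := i) h]
                rw [h3]
              · intro h3
                rw [h3]
                funext j
                by_cases hj : j = i
                · subst hj
                  simp only [Pi.sub_apply, Pi.add_apply, Pi.single_eq_same]
                  omega
                · simp [Pi.single_eq_of_ne hj]
            exact if_congr hiff rfl rfl
        · intro l _ hl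
          rw [hY0 i, Pi.single_eq_of_ne hl, zero_mul]
        · intro h
          exact absurd (Finset.mem_univ i) h

end Aux6
section Aux7

open Finset

variable {n : ℕ}

lemma monomDeriv_zero_pt {α : Fin n → ℕ} (h : 2 ≤ mlen α) :
    monomDeriv α (0 : Fin n → ℝ) = 0 := by
  rw [monomDeriv]
  refine Finset.sum_eq_zero (fun i _ => ?_)
  by_cases hi : α i = 0
  · simp [hi]
  · have hne : α - Pi.single i 1 ≠ 0 := by
      intro h0
      have := mlen_sub_single (γ := α) (l := i) hi
      rw [h0] at this
      have : mlen (0 : Fin n → ℕ) = 0 := by simp [mlen]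
      omega
    rw [monom_zero_of_ne hne]
    simp

lemma contDiff_sub_affine (a : Fin n → ℝ) (B : (Fin n → ℝ) →L[ℝ] (Fin n → ℝ)) :
    ContDiff ℝ (⊤ : ℕ∞) (fun x : Fin n → ℝ => B (x - a)) :=
  B.contDiff.comp (contDiff_id.sub contDiff_const)

lemma hasFDerivAt_affine (a : Fin n → ℝ) (B : (Fin n → ℝ) →L[ℝ] (Fin n → ℝ)) (x : Fin n → ℝ) :
    HasFDerivAt (fun y : Fin n → ℝ => B (y - a)) B x := by
  have h1 : HasFDerivAt (fun y : Fin n → ℝ => y - a)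
      (ContinuousLinearMap.id ℝ (Fin n → ℝ)) x := (hasFDerivAt_id x).sub_const a
  have := (B.hasFDerivAt (x := x - a)).comp x h1
  simpa using this

lemma hasFDerivAt_phi_component (a : Fin n → ℝ) (B : (Fin n → ℝ) →L[ℝ] (Fin n → ℝ))
    (cK : (Fin n → ℕ) →₀ ℝ) (hcK : ∀ α ∈ cK.support, 2 ≤ mlen α) (k : Fin n) :
    HasFDerivAt (fun x => (B (x - a)) k + cK.sum fun α cc => cc * monom α (B (x - a)))
      ((ContinuousLinearMap.proj k).comp B) a := by
  have h1 : HasFDerivAt (fun x : Fin n → ℝ => (B (x - a)) k)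
      ((ContinuousLinearMap.proj k).comp B) a := by
    have hpk : HasFDerivAt (fun v : Fin n → ℝ => v k)
        (ContinuousLinearMap.proj k : (Fin n → ℝ) →L[ℝ] ℝ) (B (a - a)) :=
      (ContinuousLinearMap.proj k : (Fin n → ℝ) →L[ℝ] ℝ).hasFDerivAt
    exact HasFDerivAt.comp (𝕜 := ℝ) a hpk (hasFDerivAt_affine a B a)
  have h2 : HasFDerivAt (fun x : Fin n → ℝ => cK.sum fun α cc => cc * monom α (B (x - a)))
      (0 : (Fin n → ℝ) →L[ℝ] ℝ) a := by
    have hsum : (fun x : Fin n → ℝ => cK.sum fun α cc => cc * monom α (B (x - a)))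
        = fun x => ∑ α ∈ cK.support, cK α * monom α (B (x - a)) := rfl
    rw [hsum]
    have h0 : (0 : (Fin n → ℝ) →L[ℝ] ℝ)
        = ∑ α ∈ cK.support, cK α • ((monomDeriv α (B (a - a))).comp B) := by
      refine (Finset.sum_eq_zero (fun α hα => ?_)).symm
      have hz : B (a - a) = 0 := by simp
      rw [hz, monomDeriv_zero_pt (hcK α hα)]
      simp
    rw [h0]
    refine HasFDerivAt.fun_sum (fun α hα => ?_)
    exact ((HasFDerivAt.comp (𝕜 := ℝ) a (hasFDerivAt_monom α (B (a - a)))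
      (hasFDerivAt_affine a B a)).const_mul (cK α))
  have := h1.fun_add h2
  simpa using this

end Aux7
/-- Uniqueness of privileged coordinates obtained from an affine map
followed by a polynomial map of Bellaïche's form. -/
theorem psi_coordinates_unique
    {n : ℕ} (hn : 0 < n) {w : Fin n → ℕ} (hw : IsWeight w)
    {V : Set (Fin n → ℝ)} (hV : IsOpen V)
    {X : Fin n → (Fin n → ℝ) → (Fin n → ℝ)} (hX : IsHFrame w X V)
    {a : Fin n → ℝ} (ha : a ∈ V)
    (A₁ A₂ : (Fin n → ℝ) ≃ₗ[ℝ] (Fin n → ℝ))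
    (c₁ c₂ : Fin n → ((Fin n → ℕ) →₀ ℝ))
    (hc₁ : ∀ k, ∀ α ∈ (c₁ k).support, wlen w α < w k ∧ 2 ≤ mlen α)
    (hc₂ : ∀ k, ∀ α ∈ (c₂ k).support, wlen w α < w k ∧ 2 ≤ mlen α)
    (φ₁ φ₂ : (Fin n → ℝ) → (Fin n → ℝ))
    (hφ₁ : ∀ x k, φ₁ x k =
      (A₁ (x - a)) k + (c₁ k).sum fun α cc => cc * monom α (A₁ (x - a)))
    (hφ₂ : ∀ x k, φ₂ x k =
      (A₂ (x - a)) k + (c₂ k).sum fun α cc => cc * monom α (A₂ (x - a)))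
    (hp₁ : PrivilegedAt w X a φ₁) (hp₂ : PrivilegedAt w X a φ₂) :
    φ₁ = φ₂ := by
  classical
  set Acl₁ : (Fin n → ℝ) →L[ℝ] (Fin n → ℝ) :=
    LinearMap.toContinuousLinearMap A₁.toLinearMap with hAcl₁
  set Acl₂ : (Fin n → ℝ) →L[ℝ] (Fin n → ℝ) :=
    LinearMap.toContinuousLinearMap A₂.toLinearMap with hAcl₂
  have hA₁app : ∀ v, Acl₁ v = A₁ v := fun v => rfl
  have hA₂app : ∀ v, Acl₂ v = A₂ v := fun v => rfl
  -- derivatives at `a`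
  have hder₁ : HasFDerivAt φ₁ Acl₁ a := by
    rw [show φ₁ = fun x => fun k => (Acl₁ (x - a)) k
        + (c₁ k).sum fun α cc => cc * monom α (Acl₁ (x - a)) from
      funext fun x => funext fun k => hφ₁ x k]
    rw [hasFDerivAt_pi']
    intro k
    exact hasFDerivAt_phi_component a Acl₁ (c₁ k) (fun α hα => (hc₁ k α hα).2) k
  have hder₂ : HasFDerivAt φ₂ Acl₂ a := by
    rw [show φ₂ = fun x => fun k => (Acl₂ (x - a)) k
        + (c₂ k).sum fun α cc => cc * monom α (Acl₂ (x - a)) from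
      funext fun x => funext fun k => hφ₂ x k]
    rw [hasFDerivAt_pi']
    intro k
    exact hasFDerivAt_phi_component a Acl₂ (c₂ k) (fun α hα => (hc₂ k α hα).2) k
  have hA1X : ∀ j, A₁ (X j a) = Pi.single j 1 := by
    intro j
    have := hp₁.1 j
    rwa [hder₁.fderiv] at this
  have hA2X : ∀ j, A₂ (X j a) = Pi.single j 1 := by
    intro j
    have := hp₂.1 j
    rwa [hder₂.fderiv] at this
  -- A₁ = A₂
  haveI : Nonempty (Fin n) := ⟨⟨0, hn⟩⟩
  have hAeq : A₁ = A₂ := by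
    have hli := hX.basis a ha
    have hcard : Fintype.card (Fin n) = Module.finrank ℝ (Fin n → ℝ) := by
      simp [Module.finrank_fin_fun]
    set b := basisOfLinearIndependentOfCardEqFinrank hli hcard with hbdef
    have hb : ⇑b = fun j => X j a := coe_basisOfLinearIndependentOfCardEqFinrank _ _
    refine LinearEquiv.toLinearMap_injective (b.ext fun j => ?_)
    show A₁ (b j) = A₂ (b j)
    rw [show b j = X j a from congrFun hb j, hA1X j, hA2X j]
  -- setup for the polynomial part
  set Asym : (Fin n → ℝ) →L[ℝ] (Fin n → ℝ) :=
    LinearMap.toContinuousLinearMap A₁.symm.toLinearMap with hAsym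
  set T : (Fin n → ℝ) → (Fin n → ℝ) := fun x => Acl₁ (x - a) with hT
  set S : (Fin n → ℝ) → (Fin n → ℝ) := fun y => a + Asym y with hS
  have hST : ∀ x, S (T x) = x := by
    intro x
    show a + A₁.symm (A₁ (x - a)) = x
    rw [LinearEquiv.symm_apply_apply]
    abel
  have hSa : S 0 = a := by
    show a + Asym 0 = a
    rw [map_zero, add_zero]
  have hScont : Continuous S := continuous_const.add Asym.continuous
  have hSsmooth : ContDiff ℝ (⊤ : ℕ∞) S := contDiff_const.add Asym.contDiff
  set U : Set (Fin n → ℝ) := S ⁻¹' V with hU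
  have hUopen : IsOpen U := hV.preimage hScont
  have h0U : (0 : Fin n → ℝ) ∈ U := by
    show S 0 ∈ V
    rw [hSa]; exact ha
  have hTV : ∀ x ∈ V, T x ∈ U := by
    intro x hx
    show S (T x) ∈ V
    rw [hST]; exact hx
  set Y : Fin n → (Fin n → ℝ) → (Fin n → ℝ) := fun j => fun y => Acl₁ (X j (S y)) with hYdef
  have hY : ∀ j, ContDiffOn ℝ (⊤ : ℕ∞) (Y j) U := by
    intro j
    exact Acl₁.contDiff.comp_contDiffOn
      ((hX.smooth j).comp hSsmooth.contDiffOn (fun y hy => hy))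
  have hY0 : ∀ j, Y j 0 = Pi.single j 1 := by
    intro j
    show Acl₁ (X j (S 0)) = _
    rw [hSa, hA₁app, hA1X j]
  have hXY : ∀ j, ∀ x ∈ V, Y j (T x) = Acl₁ (X j x) := by
    intro j x hx
    show Acl₁ (X j (S (T x))) = Acl₁ (X j x)
    rw [hST]
  have hTder : ∀ x, HasFDerivAt T Acl₁ x := fun x => hasFDerivAt_affine a Acl₁ x
  have hTa : T a = 0 := by
    show Acl₁ (a - a) = 0
    simp
  -- smoothness of the components of the φ's
  have hsm₁ : ∀ k, ContDiffOn ℝ (⊤ : ℕ∞) (fun x => φ₁ x k) V := by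
    intro k
    have he : (fun x => φ₁ x k) = fun x => (Acl₁ (x - a)) k
        + ∑ α ∈ (c₁ k).support, (c₁ k) α * monom α (Acl₁ (x - a)) :=
      funext fun x => hφ₁ x k
    rw [he]
    refine ContDiff.contDiffOn (ContDiff.add ?_ ?_)
    · exact (ContinuousLinearMap.proj k :
        (Fin n → ℝ) →L[ℝ] ℝ).contDiff.comp (contDiff_sub_affine a Acl₁)
    · exact ContDiff.sum fun α _ => contDiff_const.mul
        ((contDiff_monom α).comp (contDiff_sub_affine a Acl₁))
  have hsm₂ : ∀ k, ContDiffOn ℝ (⊤ : ℕ∞) (fun x => φ₂ x k) V := by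
    intro k
    have he : (fun x => φ₂ x k) = fun x => (Acl₂ (x - a)) k
        + ∑ α ∈ (c₂ k).support, (c₂ k) α * monom α (Acl₂ (x - a)) :=
      funext fun x => hφ₂ x k
    rw [he]
    refine ContDiff.contDiffOn (ContDiff.add ?_ ?_)
    · exact (ContinuousLinearMap.proj k :
        (Fin n → ℝ) →L[ℝ] ℝ).contDiff.comp (contDiff_sub_affine a Acl₂)
    · exact ContDiff.sum fun α _ => contDiff_const.mul
        ((contDiff_monom α).comp (contDiff_sub_affine a Acl₂))
  -- main claim : the coefficients agree
  suffices hc : ∀ k, c₁ k = c₂ k by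
    funext x
    funext k
    rw [hφ₁ x k, hφ₂ x k, ← hAeq, hc k]
  intro k
  by_contra hne
  set d : (Fin n → ℕ) →₀ ℝ := c₁ k - c₂ k with hd
  have hdne : d ≠ 0 := sub_ne_zero.mpr hne
  set s : Finset (Fin n → ℕ) := d.support with hsdef
  set F : (Fin n → ℕ) → ℝ := fun α => d α with hF
  have hsupp_d : ∀ α ∈ s, wlen w α < w k ∧ 2 ≤ mlen α := by
    intro α hα
    have hsub : α ∈ (c₁ k).support ∪ (c₂ k).support := Finsupp.support_sub hα
    rcases Finset.mem_union.mp hsub with h | h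
    · exact hc₁ k α h
    · exact hc₂ k α h
  have hsne : s.Nonempty := Finsupp.support_nonempty_iff.mpr hdne
  set M : ℕ := (s.image mlen).min' (hsne.image mlen) with hM
  obtain ⟨α₀, hα₀s, hα₀m⟩ : ∃ α₀ ∈ s, mlen α₀ = M := by
    have := Finset.min'_mem (s.image mlen) (hsne.image mlen)
    rw [Finset.mem_image] at this
    obtain ⟨α₀, h1, h2⟩ := this
    exact ⟨α₀, h1, h2⟩
  have hMle : ∀ β ∈ s, M ≤ mlen β := fun β hβ =>
    Finset.min'_le _ _ (Finset.mem_image_of_mem mlen hβ)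
  set p : (Fin n → ℝ) → ℝ := psum s F with hp
  have hp_smooth : ContDiff ℝ (⊤ : ℕ∞) p := contDiff_shiftedSum s F (fun α => α)
  set I : List (Fin n) := multiList α₀ with hI
  have hlen : I.length = M := by rw [hI, length_multiList, hα₀m]
  have hseq : seqW w I < w k := by
    rw [hI, seqW_multiList]
    exact (hsupp_d α₀ hα₀s).1
  -- the composed function equals the difference of the coordinates
  have hgT : (fun x => p (T x)) = fun x => φ₁ x k - φ₂ x k := by
    funext x
    rw [hφ₁ x k, hφ₂ x k, ← hAeq]
    have h1 : p (T x) = d.sum fun α cc => cc * monom α (A₁ (x - a)) := rfl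
    rw [h1, hd, Finsupp.sum_sub_index (fun α b₁ b₂ => by ring)]
    ring
  -- order vanishing
  have hvz : vfSeq X I (fun x => p (T x)) a = 0 := by
    rw [hgT]
    rw [vfSeq_sub hV hX.smooth (hsm₁ k) (hsm₂ k) I a ha]
    rw [(hp₁.2 k).1 I hseq, (hp₂.2 k).1 I hseq, sub_zero]
  -- chain rule
  have hchain : vfSeq X I (fun x => p (T x)) a = vfSeq Y I p 0 := by
    have := vfSeq_chain hV hUopen hY hTder hTV hXY hp_smooth.contDiffOn I a ha
    rw [this, hTa]
  -- evaluation via the structure theorem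
  obtain ⟨c, hsmc, hsuppc, hrep, htopc⟩ := lemmaB hUopen h0U hY hY0 s F I
  have hval : vfSeq Y I p 0 = ((∏ i, (α₀ i).factorial : ℕ) : ℝ) * d α₀ := by
    rw [hrep 0 h0U, hlen]
    have hmem : α₀ ∈ mIdx n (M + 1) := mem_mIdx.mpr fun j => by
      have := single_le_mlen α₀ j; omega
    rw [Finset.sum_eq_single_of_mem α₀ hmem ?_]
    · have h1 : c α₀ 0 = 1 := by
        have h2 := htopc α₀ (by rw [hlen, hα₀m])
        rw [h2, if_pos]
        funext j
        rw [hI, count_multiList]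
      rw [h1, one_mul, pdPow_psum_zero, if_pos hα₀s]
    · intro β hβ hne2
      rcases lt_trichotomy (mlen β) M with h | h | h
      · have hβs : β ∉ s := fun hβs => absurd (hMle β hβs) (by omega)
        rw [pdPow_psum_zero, if_neg hβs, mul_zero, mul_zero]
      · have h2 := htopc β (by rw [hlen]; exact h)
        rw [h2, if_neg, zero_mul]
        intro he
        apply hne2
        rw [he]
        funext j
        rw [hI, count_multiList]
      · have h2 := hsuppc β (by rw [hlen]; exact h)
        rw [congrFun h2 0, zero_mul]
  have hzero : ((∏ i, (α₀ i).factorial : ℕ) : ℝ) * d α₀ = 0 := by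
    rw [← hval, ← hchain, hvz]
  have hfac : ((∏ i, (α₀ i).factorial : ℕ) : ℝ) ≠ 0 := by
    rw [Nat.cast_ne_zero]
    exact Finset.prod_ne_zero_iff.mpr fun i _ => Nat.factorial_ne_zero _
  have hd0 : d α₀ ≠ 0 := Finsupp.mem_support_iff.mp hα₀s
  exact (mul_ne_zero hfac hd0) hzero

end Carnot
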